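/- Let α be a good endomorphism of R and I a C-hyperideal such that for all a, b ∈ R, a∘b ⊆ I implies a ∈ I or α(bⁿ) ⊆ I for some n ∈ ℕ. Then ᵅ√I is an α-prime hyperideal of R. -/

import Mathlib

/-!
`ᵅ√I` is the radical of the preimage hyperideal `α⁻¹(I)`, and the radical of any hyperideal is a
hyperideal. For closure under addition, `(a + c)^(m+n+2)` lies, by subdistributivity, in the
additive subgroup generated by the products of `i` copies of `a` and `j` copies of `c` with
`i + j = m + n + 2`, and each of these has `a^(m+1)` or `c^(n+1)` as a factor.

For `α`-primality, take `t ∈ x ∘ y` with `α(tⁿ) ⊆ I` and `w ∈ tⁿ`; then `w ∈ u ∘ v` with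
`u ∈ xⁿ`, `v ∈ yⁿ`. As `α(w) ∈ α(u) ∘ α(v)` meets `I`, the C-property gives `α(u) ∘ α(v) ⊆ I`.
The hypothesis on `I` yields `α(u) ∈ I` or `α(α(v)ᵏ) ⊆ I`; in either case a power of `α(x)`,
respectively of `α(α(y))`, meets `I` and hence, again by the C-property, lies in it.
-/

open Pointwise

namespace HyperPaper

/-- A commutative multiplicative hyperring on an additive commutative group:
the hypermultiplication is associative, commutative, subdistributive over `+`,
and compatible with negation. -/
structure MulHyperring (R : Type*) [AddCommGroup R] where
  hmul : R → R → Set R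
  nonempty : ∀ a b, (hmul a b).Nonempty
  comm : ∀ a b, hmul a b = hmul b a
  assoc : ∀ a b c, (⋃ t ∈ hmul a b, hmul t c) = ⋃ t ∈ hmul b c, hmul a t
  distrib : ∀ a b c, hmul a (b + c) ⊆ hmul a b + hmul a c
  hmul_neg : ∀ a b, hmul a (-b) = -(hmul a b)

variable {R : Type*} [AddCommGroup R]

/-- Product of two subsets under the hyperoperation. -/
def MulHyperring.setMul (H : MulHyperring R) (A B : Set R) : Set R :=
  ⋃ a ∈ A, ⋃ b ∈ B, H.hmul a b

/-- `H.hpow a n` is the `(n+1)`-fold hyperproduct `a ∘ a ∘ ⋯ ∘ a`. -/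
def MulHyperring.hpow (H : MulHyperring R) (a : R) : ℕ → Set R
  | 0 => {a}
  | n + 1 => H.setMul {a} (H.hpow a n)

/-- `H.hprod a l` is the hyperproduct of the list `a :: l`. -/
def MulHyperring.hprod (H : MulHyperring R) (a : R) : List R → Set R
  | [] => {a}
  | b :: l => H.setMul {a} (H.hprod b l)

/-- A hyperideal: an additive subgroup absorbing hypermultiplication. -/
structure Hyperideal (H : MulHyperring R) where
  carrier : Set R
  zero_mem : (0 : R) ∈ carrier
  sub_mem : ∀ a b, a ∈ carrier → b ∈ carrier → a - b ∈ carrier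
  absorb : ∀ r x, x ∈ carrier → H.hmul r x ⊆ carrier

/-- A C-hyperideal: any finite hyperproduct meeting it is contained in it. -/
def IsCHyperideal (H : MulHyperring R) (I : Hyperideal H) : Prop :=
  ∀ a (l : List R), (H.hprod a l ∩ I.carrier).Nonempty → H.hprod a l ⊆ I.carrier

/-- A good homomorphism between multiplicative hyperrings. -/
def IsGoodHom {R₁ R₂ : Type*} [AddCommGroup R₁] [AddCommGroup R₂]
    (H₁ : MulHyperring R₁) (H₂ : MulHyperring R₂) (f : R₁ → R₂) : Prop :=
  (∀ x y, f (x + y) = f x + f y) ∧ ∀ x y, f '' H₁.hmul x y = H₂.hmul (f x) (f y)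

/-- A good endomorphism. -/
def IsGoodEndo (H : MulHyperring R) (α : R → R) : Prop :=
  IsGoodHom H H α

/-- A proper hyperideal `I` is `α`-prime if `x ∘ y ⊆ I` implies `x ∈ I` or `α y ∈ I`. -/
def IsAlphaPrime (H : MulHyperring R) (α : R → R) (I : Hyperideal H) : Prop :=
  I.carrier ≠ Set.univ ∧
    ∀ x y, H.hmul x y ⊆ I.carrier → x ∈ I.carrier ∨ α y ∈ I.carrier

/-- A proper hyperideal `I` is prime if `x ∘ y ⊆ I` implies `x ∈ I` or `y ∈ I`. -/
def IsPrime (H : MulHyperring R) (I : Hyperideal H) : Prop :=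
  I.carrier ≠ Set.univ ∧
    ∀ x y, H.hmul x y ⊆ I.carrier → x ∈ I.carrier ∨ y ∈ I.carrier

/-- The radical `√S = {r | rⁿ ⊆ S for some n}`. -/
def radical (H : MulHyperring R) (S : Set R) : Set R :=
  {r | ∃ n : ℕ, H.hpow r n ⊆ S}

/-- The `α`-radical `ᵅ√S = {r | α(rⁿ) ⊆ S for some n}`. -/
def alphaRad (H : MulHyperring R) (α : R → R) (S : Set R) : Set R :=
  {r | ∃ n : ℕ, α '' H.hpow r n ⊆ S}

/-- The set of `α`-nilpotent elements. -/
def nilAlpha (H : MulHyperring R) (α : R → R) : Set R :=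
  {x | ∃ n : ℕ, (0 : R) ∈ α '' H.hpow x n}

/-- The `n`-fold set power of a hyperideal carrier: `idealPow H S n = S^(n+1)`. -/
def idealPow (H : MulHyperring R) (S : Set R) : ℕ → Set R
  | 0 => S
  | n + 1 => H.setMul S (idealPow H S n)


namespace MulHyperring

section SetMul

variable (H : MulHyperring R)

theorem mem_setMul {A B : Set R} {w : R} :
    w ∈ H.setMul A B ↔ ∃ a ∈ A, ∃ b ∈ B, w ∈ H.hmul a b := by
  simp only [setMul, Set.mem_iUnion, exists_prop]

theorem setMul_mono {A A' B B' : Set R} (hA : A ⊆ A') (hB : B ⊆ B') :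
    H.setMul A B ⊆ H.setMul A' B' := fun _ hw => by
  obtain ⟨a, ha, b, hb, h⟩ := (H.mem_setMul).mp hw
  exact (H.mem_setMul).mpr ⟨a, hA ha, b, hB hb, h⟩

theorem setMul_comm (A B : Set R) : H.setMul A B = H.setMul B A := by
  ext w
  simp only [mem_setMul]
  constructor <;> rintro ⟨a, ha, b, hb, h⟩ <;> exact ⟨b, hb, a, ha, by rwa [H.comm]⟩

theorem setMul_assoc (A B C : Set R) :
    H.setMul (H.setMul A B) C = H.setMul A (H.setMul B C) := by
  ext w
  simp only [mem_setMul]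
  constructor
  · rintro ⟨t, ⟨a, ha, b, hb, ht⟩, c, hc, hw⟩
    have hw' : w ∈ ⋃ t ∈ H.hmul a b, H.hmul t c := Set.mem_biUnion ht hw
    rw [H.assoc] at hw'
    obtain ⟨s, hs, hws⟩ := Set.mem_iUnion₂.mp hw'
    exact ⟨a, ha, s, ⟨b, hb, c, hc, hs⟩, hws⟩
  · rintro ⟨a, ha, s, ⟨b, hb, c, hc, hs⟩, hw⟩
    have hw' : w ∈ ⋃ t ∈ H.hmul b c, H.hmul a t := Set.mem_biUnion hs hw
    rw [← H.assoc] at hw'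
    obtain ⟨t, ht, hwt⟩ := Set.mem_iUnion₂.mp hw'
    exact ⟨t, ⟨a, ha, b, hb, ht⟩, c, hc, hwt⟩

theorem setMul_singleton (x y : R) : H.setMul {x} {y} = H.hmul x y := by
  simp only [setMul, Set.mem_singleton_iff, Set.iUnion_iUnion_eq_left]

theorem setMul_neg_right (A B : Set R) : H.setMul A (-B) = -H.setMul A B := by
  ext w
  simp only [Set.mem_neg, mem_setMul]
  constructor
  · rintro ⟨a, ha, b, hb, h⟩
    exact ⟨a, ha, -b, hb, by rwa [H.hmul_neg, Set.mem_neg, neg_neg]⟩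
  · rintro ⟨a, ha, b, hb, h⟩
    exact ⟨a, ha, -b, by rwa [neg_neg], by rwa [H.hmul_neg, Set.mem_neg]⟩

theorem setMul_neg_left (A B : Set R) : H.setMul (-A) B = -H.setMul A B := by
  rw [setMul_comm, setMul_neg_right, setMul_comm]

theorem hpow_succ (a : R) (n : ℕ) : H.hpow a (n + 1) = H.setMul {a} (H.hpow a n) := rfl

theorem setMul_hpow (a : R) (p q : ℕ) :
    H.setMul (H.hpow a p) (H.hpow a q) = H.hpow a (p + q + 1) := by
  induction p with
  | zero => rw [Nat.zero_add]; rfl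
  | succ p ih => rw [hpow_succ, setMul_assoc, ih, Nat.add_right_comm p 1 q]; rfl

theorem hpow_nonempty (a : R) (n : ℕ) : (H.hpow a n).Nonempty := by
  induction n with
  | zero => exact Set.singleton_nonempty a
  | succ n ih =>
    obtain ⟨b, hb⟩ := ih
    obtain ⟨w, hw⟩ := H.nonempty a b
    exact ⟨w, (H.mem_setMul).mpr ⟨a, rfl, b, hb, hw⟩⟩

theorem hpow_eq_hprod (a : R) (n : ℕ) : H.hpow a n = H.hprod a (List.replicate n a) := by
  induction n with
  | zero => rfl
  | succ n ih => rw [List.replicate_succ, hpow_succ, ih]; rfl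

theorem hmul_eq_hprod (x y : R) : H.hmul x y = H.hprod x [y] := by
  rw [← setMul_singleton]; rfl

theorem hpow_neg (b : R) (k : ℕ) :
    H.hpow (-b) k = H.hpow b k ∨ H.hpow (-b) k = -H.hpow b k := by
  induction k with
  | zero => exact Or.inr (Set.neg_singleton b).symm
  | succ k ih =>
    rw [hpow_succ, hpow_succ, ← Set.neg_singleton, setMul_neg_left]
    rcases ih with ih | ih
    · exact Or.inr (by rw [ih])
    · exact Or.inl (by rw [ih, setMul_neg_right, neg_neg])

theorem hpow_subset_setMul_hpow {t x y : R} (ht : t ∈ H.hmul x y) (n : ℕ) :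
    H.hpow t n ⊆ H.setMul (H.hpow x n) (H.hpow y n) := by
  induction n with
  | zero => simpa only [hpow, setMul_singleton, Set.singleton_subset_iff] using ht
  | succ n ih =>
    refine (H.setMul_mono (Set.singleton_subset_iff.mpr ht) ih).trans_eq ?_
    rw [← setMul_singleton, setMul_assoc, ← H.setMul_assoc {y}, H.setMul_comm {y},
      setMul_assoc, ← setMul_assoc]
    rfl

theorem hpow_subset_hpow_of_mem {s b : R} {m : ℕ} (hs : s ∈ H.hpow b m) (k : ℕ) :
    H.hpow s k ⊆ H.hpow b (m + k * (m + 1)) := by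
  induction k with
  | zero => simpa only [hpow, zero_mul, add_zero, Set.singleton_subset_iff] using hs
  | succ k ih =>
    refine (H.setMul_mono (Set.singleton_subset_iff.mpr hs) ih).trans_eq ?_
    rw [setMul_hpow]
    congr 1
    ring

end SetMul

def colon (H : MulHyperring R) (hzero : ∀ r : R, H.hmul 0 r = {0}) (G : AddSubgroup R)
    (r : R) : AddSubgroup R where
  carrier := {s | H.hmul r s ⊆ G}
  zero_mem' := by
    simp only [Set.mem_ofPred_eq, H.comm r, hzero, Set.singleton_subset_iff, SetLike.mem_coe,
      G.zero_mem]
  add_mem' {s₁ s₂} h₁ h₂ := (H.distrib r s₁ s₂).trans <| by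
    rintro _ ⟨u, hu, v, hv, rfl⟩
    exact G.add_mem (h₁ hu) (h₂ hv)
  neg_mem' {s} hs := by
    intro w hw
    rw [H.hmul_neg, Set.mem_neg] at hw
    simpa only [neg_neg, SetLike.mem_coe] using G.neg_mem (hs hw)

end MulHyperring

namespace IsGoodHom

variable {R₁ R₂ : Type*} [AddCommGroup R₁] [AddCommGroup R₂]
  {H₁ : MulHyperring R₁} {H₂ : MulHyperring R₂} {f : R₁ → R₂}

def toAddMonoidHom (hf : IsGoodHom H₁ H₂ f) : R₁ →+ R₂ := AddMonoidHom.mk' f hf.1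

theorem image_setMul (hf : IsGoodHom H₁ H₂ f) (A B : Set R₁) :
    f '' H₁.setMul A B = H₂.setMul (f '' A) (f '' B) := by
  ext w
  simp only [Set.mem_image, MulHyperring.mem_setMul]
  constructor
  · rintro ⟨v, ⟨a, ha, b, hb, hv⟩, rfl⟩
    exact ⟨f a, ⟨a, ha, rfl⟩, f b, ⟨b, hb, rfl⟩, hf.2 a b ▸ Set.mem_image_of_mem f hv⟩
  · rintro ⟨_, ⟨a, ha, rfl⟩, _, ⟨b, hb, rfl⟩, hw⟩
    obtain ⟨v, hv, rfl⟩ := (hf.2 a b).symm ▸ hw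
    exact ⟨v, ⟨a, ha, b, hb, hv⟩, rfl⟩

theorem image_hpow (hf : IsGoodHom H₁ H₂ f) (a : R₁) (n : ℕ) :
    f '' H₁.hpow a n = H₂.hpow (f a) n := by
  induction n with
  | zero => exact Set.image_singleton
  | succ n ih => rw [MulHyperring.hpow_succ, hf.image_setMul, Set.image_singleton, ih]; rfl

end IsGoodHom

namespace Hyperideal

variable {H : MulHyperring R}

def toAddSubgroup (J : Hyperideal H) : AddSubgroup R where
  carrier := J.carrier
  zero_mem' := J.zero_mem
  neg_mem' {x} hx := by simpa only [zero_sub] using J.sub_mem 0 x J.zero_mem hx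
  add_mem' {x y} hx hy := by
    have hy' : -y ∈ J.carrier := by simpa only [zero_sub] using J.sub_mem 0 y J.zero_mem hy
    simpa only [sub_neg_eq_add] using J.sub_mem x (-y) hx hy'

theorem setMul_subset_of_right (J : Hyperideal H) (A : Set R) {B : Set R}
    (hB : B ⊆ J.carrier) : H.setMul A B ⊆ J.carrier := fun _ hw => by
  obtain ⟨a, _, b, hb, h⟩ := (H.mem_setMul).mp hw
  exact J.absorb a b (hB hb) h

theorem setMul_subset_of_left (J : Hyperideal H) {A : Set R} (B : Set R)
    (hA : A ⊆ J.carrier) : H.setMul A B ⊆ J.carrier := by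
  rw [H.setMul_comm]
  exact J.setMul_subset_of_right B hA

theorem hpow_subset_of_le (J : Hyperideal H) {a : R} {m k : ℕ}
    (hm : H.hpow a m ⊆ J.carrier) (hmk : m ≤ k) : H.hpow a k ⊆ J.carrier := by
  induction k, hmk using Nat.le_induction with
  | base => exact hm
  | succ k _ ih => exact J.setMul_subset_of_right {a} ih

def comap {R₁ R₂ : Type*} [AddCommGroup R₁] [AddCommGroup R₂]
    {H₁ : MulHyperring R₁} {H₂ : MulHyperring R₂} {f : R₁ → R₂} (hf : IsGoodHom H₁ H₂ f)
    (I : Hyperideal H₂) : Hyperideal H₁ where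
  carrier := f ⁻¹' I.carrier
  zero_mem := by
    rw [Set.mem_preimage, show f 0 = 0 from map_zero hf.toAddMonoidHom]
    exact I.zero_mem
  sub_mem a b ha hb := by
    rw [Set.mem_preimage, show f (a - b) = f a - f b from map_sub hf.toAddMonoidHom a b]
    exact I.sub_mem _ _ ha hb
  absorb r x hx := by
    rw [← Set.image_subset_iff, hf.2]
    exact I.absorb (f r) (f x) hx

end Hyperideal

namespace MulHyperring

variable (H : MulHyperring R)

/-- The hyperproduct of `i` copies of `a` and `j` copies of `c`; there is no empty product, so
the case `i = j = 0` is `∅`. -/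
def mixedPow (a c : R) : ℕ → ℕ → Set R
  | 0, 0 => ∅
  | i + 1, 0 => H.hpow a i
  | 0, j + 1 => H.hpow c j
  | i + 1, j + 1 => H.setMul (H.hpow a i) (H.hpow c j)

theorem setMul_mixedPow_left (a c : R) {i j : ℕ} (h : i + j ≠ 0) :
    H.setMul {a} (H.mixedPow a c i j) = H.mixedPow a c (i + 1) j := by
  match i, j with
  | 0, 0 => exact absurd rfl h
  | i + 1, 0 => rfl
  | 0, j + 1 => rfl
  | i + 1, j + 1 => exact (H.setMul_assoc _ _ _).symm

theorem setMul_mixedPow_right (a c : R) {i j : ℕ} (h : i + j ≠ 0) :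
    H.setMul {c} (H.mixedPow a c i j) = H.mixedPow a c i (j + 1) := by
  match i, j with
  | 0, 0 => exact absurd rfl h
  | 0, j + 1 => rfl
  | i + 1, 0 => exact H.setMul_comm _ _
  | i + 1, j + 1 =>
    change H.setMul {c} (H.setMul (H.hpow a i) (H.hpow c j)) =
      H.setMul (H.hpow a i) (H.setMul {c} (H.hpow c j))
    rw [H.setMul_comm {c}, setMul_assoc, H.setMul_comm (H.hpow c j)]

/-- The mixed products with `n + 1` factors, i.e. the terms of the expansion of
`H.hpow (a + c) n`. -/
def binomialTerms (a c : R) (n : ℕ) : Set R :=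
  {x | ∃ i j, i + j = n + 1 ∧ x ∈ H.mixedPow a c i j}

theorem hpow_add_subset_closure_binomialTerms (hzero : ∀ r : R, H.hmul 0 r = {0})
    (a c : R) (n : ℕ) :
    H.hpow (a + c) n ⊆ AddSubgroup.closure (H.binomialTerms a c n) := by
  induction n with
  | zero =>
    rintro _ rfl
    exact add_mem (AddSubgroup.subset_closure ⟨1, 0, rfl, rfl⟩)
      (AddSubgroup.subset_closure ⟨0, 1, rfl, rfl⟩)
  | succ n ih =>
    have hterms : H.binomialTerms a c n ⊆
        H.colon hzero (AddSubgroup.closure (H.binomialTerms a c (n + 1))) (a + c) := by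
      rintro g ⟨i, j, hij, hg⟩
      refine (H.comm _ _ ▸ H.distrib g a c).trans ?_
      rintro _ ⟨u, hu, v, hv, rfl⟩
      have hne : i + j ≠ 0 := by omega
      refine add_mem (AddSubgroup.subset_closure ⟨i + 1, j, by omega, ?_⟩)
        (AddSubgroup.subset_closure ⟨i, j + 1, by omega, ?_⟩)
      · rw [← H.setMul_mixedPow_left a c hne]
        exact (H.mem_setMul).mpr ⟨a, rfl, g, hg, H.comm g a ▸ hu⟩
      · rw [← H.setMul_mixedPow_right a c hne]
        exact (H.mem_setMul).mpr ⟨c, rfl, g, hg, H.comm g c ▸ hv⟩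
    intro w hw
    obtain ⟨_, rfl, s, hs, hws⟩ := (H.mem_setMul).mp hw
    exact (AddSubgroup.closure_le _).mpr hterms (ih hs) hws

theorem mixedPow_subset (J : Hyperideal H) {a c : R} {m n i j : ℕ}
    (ha : H.hpow a m ⊆ J.carrier) (hc : H.hpow c n ⊆ J.carrier) (hij : i + j = m + n + 2) :
    H.mixedPow a c i j ⊆ J.carrier := by
  match i, j with
  | 0, 0 => exact Set.empty_subset _
  | i + 1, 0 => exact J.hpow_subset_of_le ha (by omega)
  | 0, j + 1 => exact J.hpow_subset_of_le hc (by omega)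
  | i + 1, j + 1 =>
    rcases le_or_gt m i with hi | hi
    · exact J.setMul_subset_of_left _ (J.hpow_subset_of_le ha hi)
    · exact J.setMul_subset_of_right _ (J.hpow_subset_of_le hc (by omega))

end MulHyperring

namespace Hyperideal

variable {H : MulHyperring R}

theorem add_mem_radical (hzero : ∀ r : R, H.hmul 0 r = {0}) (J : Hyperideal H) {a c : R}
    (ha : a ∈ radical H J.carrier) (hc : c ∈ radical H J.carrier) :
    a + c ∈ radical H J.carrier := by
  obtain ⟨m, hm⟩ := ha
  obtain ⟨n, hn⟩ := hc
  refine ⟨m + n + 1, (H.hpow_add_subset_closure_binomialTerms hzero a c _).trans ?_⟩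
  refine (AddSubgroup.closure_le J.toAddSubgroup).mpr ?_
  rintro x ⟨i, j, hij, hx⟩
  exact H.mixedPow_subset J hm hn hij hx

theorem neg_mem_radical (J : Hyperideal H) {b : R} (hb : b ∈ radical H J.carrier) :
    -b ∈ radical H J.carrier := by
  obtain ⟨n, hn⟩ := hb
  refine ⟨n, ?_⟩
  rcases H.hpow_neg b n with h | h
  · exact h ▸ hn
  · rw [h]
    intro x hx
    exact neg_neg x ▸ J.toAddSubgroup.neg_mem (hn hx)

def radical (hzero : ∀ r : R, H.hmul 0 r = {0}) (J : Hyperideal H) : Hyperideal H where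
  carrier := HyperPaper.radical H J.carrier
  zero_mem := ⟨0, Set.singleton_subset_iff.mpr J.zero_mem⟩
  sub_mem a b ha hb := sub_eq_add_neg a b ▸ J.add_mem_radical hzero ha (J.neg_mem_radical hb)
  absorb r x := by
    rintro ⟨n, hn⟩ t ht
    exact ⟨n, (H.hpow_subset_setMul_hpow ht n).trans (J.setMul_subset_of_right _ hn)⟩

end Hyperideal

section AlphaRadical

variable {H : MulHyperring R} {α : R → R}

theorem alphaRad_eq_radical_preimage (S : Set R) : alphaRad H α S = radical H (α ⁻¹' S) := by
  ext r
  simp only [alphaRad, radical, Set.image_subset_iff, Set.mem_ofPred_eq]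

theorem mem_alphaRad_iff (hα : IsGoodEndo H α) {S : Set R} {r : R} :
    r ∈ alphaRad H α S ↔ ∃ n, H.hpow (α r) n ⊆ S := by
  simp only [alphaRad, hα.image_hpow, Set.mem_ofPred_eq]

namespace IsCHyperideal

variable {I : Hyperideal H}

theorem hmul_subset (hC : IsCHyperideal H I) {x y : R} (h : (H.hmul x y ∩ I.carrier).Nonempty) :
    H.hmul x y ⊆ I.carrier := by
  rw [H.hmul_eq_hprod] at h ⊢
  exact hC x [y] h

theorem hpow_subset (hC : IsCHyperideal H I) {a : R} {n : ℕ}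
    (h : (H.hpow a n ∩ I.carrier).Nonempty) : H.hpow a n ⊆ I.carrier := by
  rw [H.hpow_eq_hprod] at h ⊢
  exact hC a _ h

theorem exists_hpow_subset_of_mem_hpow (hC : IsCHyperideal H I) {s b : R} {m k : ℕ}
    (hs : s ∈ H.hpow b m) (hsk : H.hpow s k ⊆ I.carrier) : ∃ N, H.hpow b N ⊆ I.carrier := by
  obtain ⟨z, hz⟩ := H.hpow_nonempty s k
  exact ⟨_, hC.hpow_subset ⟨z, H.hpow_subset_hpow_of_mem hs k hz, hsk hz⟩⟩

theorem mem_or_mem_alphaRad (hα : IsGoodEndo H α) (hC : IsCHyperideal H I)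
    (hcond : ∀ a b : R, H.hmul a b ⊆ I.carrier →
      a ∈ I.carrier ∨ ∃ n : ℕ, α '' H.hpow b n ⊆ I.carrier)
    {x y : R} (hxy : H.hmul x y ⊆ alphaRad H α I.carrier) :
    x ∈ alphaRad H α I.carrier ∨ α y ∈ alphaRad H α I.carrier := by
  obtain ⟨t, ht⟩ := H.nonempty x y
  obtain ⟨n, hn⟩ := (mem_alphaRad_iff hα).mp (hxy ht)
  obtain ⟨w, hw⟩ := H.hpow_nonempty t n
  obtain ⟨u, hu, v, hv, huv⟩ := (H.mem_setMul).mp (H.hpow_subset_setMul_hpow ht n hw)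
  have hαuv : H.hmul (α u) (α v) ⊆ I.carrier := by
    refine hC.hmul_subset ⟨α w, hα.2 u v ▸ Set.mem_image_of_mem α huv, ?_⟩
    exact hn (hα.image_hpow t n ▸ Set.mem_image_of_mem α hw)
  rw [mem_alphaRad_iff hα, mem_alphaRad_iff hα]
  rcases hcond (α u) (α v) hαuv with hu' | ⟨k, hk⟩
  · have hux : α u ∈ H.hpow (α x) n := hα.image_hpow x n ▸ Set.mem_image_of_mem α hu
    exact Or.inl (hC.exists_hpow_subset_of_mem_hpow (k := 0) hux (Set.singleton_subset_iff.mpr hu'))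
  · refine Or.inr (hC.exists_hpow_subset_of_mem_hpow (m := n) ?_ (hα.image_hpow _ k ▸ hk))
    rw [← hα.image_hpow, ← hα.image_hpow]
    exact Set.mem_image_of_mem α (Set.mem_image_of_mem α hv)

end IsCHyperideal

end AlphaRadical

end HyperPaper

open HyperPaper

/-- If for all `a b`, `a∘b ⊆ I` implies `a ∈ I` or `α(bⁿ) ⊆ I` for
some `n`, then `ᵅ√I` is an `α`-prime hyperideal. -/
theorem stmt17 {R : Type*} [AddCommGroup R] (H : MulHyperring R) (α : R → R)
    (hα : IsGoodEndo H α) (hzero : ∀ r : R, H.hmul 0 r = {(0 : R)})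
    (I : Hyperideal H) (hC : IsCHyperideal H I)
    (hcond : ∀ a b : R, H.hmul a b ⊆ I.carrier →
      a ∈ I.carrier ∨ ∃ n : ℕ, α '' H.hpow b n ⊆ I.carrier)
    (hproper : alphaRad H α I.carrier ≠ Set.univ) :
    ∃ J : Hyperideal H, J.carrier = alphaRad H α I.carrier ∧
      IsAlphaPrime H α J := by
  have hJ : ((Hyperideal.comap hα I).radical hzero).carrier = alphaRad H α I.carrier :=
    (alphaRad_eq_radical_preimage I.carrier).symm
  refine ⟨_, hJ, ?_⟩
  rw [IsAlphaPrime, hJ]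
  exact ⟨hproper, fun x y => hC.mem_or_mem_alphaRad hα hcond⟩
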